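/- arXiv:1605.03791 — 5 statements merged into one kernel-verified Lean document; each statement's English description precedes it below -/
import Mathlib

section
/- Under the inexactness condition of VMILAn (h(ỹ) − h(y) ≤ −(τ/2)h_γ(ỹ), with y the exact minimizer of h), if α ∈ (0, α_max] and D has eigenvalues in [1/μ, μ], then (1/(4 α_max μ)) ‖ỹ − x^(k)‖² ≤ −(1+τ) h_γ(ỹ). -/
/-!
The model `h` is `f₁` plus a quadratic with Hessian `D / α`, so at its minimiser `y` it grows
at least like `‖x - y‖²_D / (2α)`. Applied at `ỹ` and at `x^(k)` (where `h` vanishes), together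
with the inexactness condition and `h_γ ≤ h`, this bounds both `‖ỹ - y‖²_D` and `‖y - x^(k)‖²_D`
by multiples of `-h_γ(ỹ)`; the parallelogram law combines them into a bound on `‖ỹ - x^(k)‖²_D`,
and the spectral bound `D ≥ 1/μ` passes to the Euclidean norm.
-/

open Matrix

/-- The Euclidean norm on `ℝⁿ`. -/
noncomputable def enorm {n : ℕ} (x : Fin n → ℝ) : ℝ := Real.sqrt (∑ i, x i ^ 2)

/-- Convexity of an extended-real-valued function. -/
def ERealConvex {n : ℕ} (Ψ : (Fin n → ℝ) → EReal) : Prop :=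
  ∀ x y : Fin n → ℝ, ∀ t : ℝ, 0 ≤ t → t ≤ 1 →
    Ψ (t • x + (1 - t) • y) ≤ ((t : ℝ) : EReal) * Ψ x + ((1 - t : ℝ) : EReal) * Ψ y

open Set Filter Topology

namespace Matrix

variable {ι R : Type*} [Fintype ι]

theorem dotProduct_mulVec_add_add_dotProduct_mulVec_sub [CommRing R] (D : Matrix ι ι R)
    (u v : ι → R) :
    (u + v) ⬝ᵥ D *ᵥ (u + v) + (u - v) ⬝ᵥ D *ᵥ (u - v) =
      2 * (u ⬝ᵥ D *ᵥ u) + 2 * (v ⬝ᵥ D *ᵥ v) := by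
  simp only [mulVec_add, mulVec_sub, dotProduct_add, add_dotProduct, dotProduct_sub,
    sub_dotProduct]
  ring

theorem dotProduct_mulVec_segment [CommRing R] (D : Matrix ι ι R) (u v : ι → R) (t : R) :
    (t • u + (1 - t) • v) ⬝ᵥ D *ᵥ (t • u + (1 - t) • v) =
      t * (u ⬝ᵥ D *ᵥ u) + (1 - t) * (v ⬝ᵥ D *ᵥ v) - t * (1 - t) * ((u - v) ⬝ᵥ D *ᵥ (u - v)) := by
  simp only [mulVec_add, mulVec_sub, mulVec_smul, dotProduct_add, add_dotProduct,
    dotProduct_sub, sub_dotProduct, dotProduct_smul, smul_dotProduct, smul_eq_mul]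
  ring

theorem PosSemidef.dotProduct_mulVec_sub_le {D : Matrix ι ι ℝ} (hD : D.PosSemidef)
    (u v : ι → ℝ) :
    (u - v) ⬝ᵥ D *ᵥ (u - v) ≤ 2 * (u ⬝ᵥ D *ᵥ u) + 2 * (v ⬝ᵥ D *ᵥ v) := by
  have hadd := hD.dotProduct_mulVec_nonneg (u + v)
  rw [star_trivial] at hadd
  linarith [D.dotProduct_mulVec_add_add_dotProduct_mulVec_sub u v]

theorem IsHermitian.mul_dotProduct_self_le [DecidableEq ι] {D : Matrix ι ι ℝ}
    (hD : D.IsHermitian) {c : ℝ} (hc : ∀ r ∈ spectrum ℝ D, c ≤ r) (z : ι → ℝ) :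
    c * (z ⬝ᵥ z) ≤ z ⬝ᵥ D *ᵥ z := by
  have hshift : (D - algebraMap ℝ _ c).PosSemidef := by
    refine posSemidef_iff_isHermitian_and_spectrum_nonneg.mpr ⟨?_, ?_⟩
    · simpa [Algebra.algebraMap_eq_smul_one] using
        hD.sub (isHermitian_one.smul (IsSelfAdjoint.all c))
    · rw [← spectrum.sub_singleton_eq]
      rintro _ ⟨r, hr, _, rfl, rfl⟩
      exact sub_nonneg.mpr (hc r hr)
  simpa [Algebra.algebraMap_eq_smul_one, sub_mulVec, dotProduct_sub, smul_mulVec,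
    dotProduct_smul] using hshift.dotProduct_mulVec_nonneg z

end Matrix

theorem enorm_sq {n : ℕ} (x : Fin n → ℝ) : _root_.enorm x ^ 2 = x ⬝ᵥ x := by
  rw [_root_.enorm, Real.sq_sqrt (by positivity)]
  simp only [dotProduct, sq]

theorem Matrix.IsHermitian.enorm_sq_le {n : ℕ} {D : Matrix (Fin n) (Fin n) ℝ}
    (hD : D.IsHermitian) {μ : ℝ} (hμ : 0 < μ) (hspec : spectrum ℝ D ⊆ Icc (1 / μ) μ)
    (z : Fin n → ℝ) : _root_.enorm z ^ 2 ≤ μ * (z ⬝ᵥ D *ᵥ z) := by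
  have hlow := hD.mul_dotProduct_self_le (fun r hr => (hspec hr).1) z
  rw [← enorm_sq] at hlow
  rwa [one_div, inv_mul_le_iff₀ hμ] at hlow

theorem EReal.coe_add_sub_coe_eq_top_iff {r s : ℝ} {a : EReal} :
    (r : EReal) + a - s = ⊤ ↔ a = ⊤ := by
  induction a <;> simp [← EReal.coe_add, ← EReal.coe_sub]

theorem le_of_forall_one_sub_mul_le {m d : ℝ} (h : ∀ t ∈ Ioo (0 : ℝ) 1, (1 - t) * m ≤ d) :
    m ≤ d := by
  have hcont : Continuous fun t : ℝ => (1 - t) * m := by fun_prop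
  have hlim : Tendsto (fun t : ℝ => (1 - t) * m) (𝓝[>] 0) (𝓝 m) := by
    simpa using (hcont.tendsto 0).mono_left nhdsWithin_le_nhds
  exact le_of_tendsto hlim (Filter.mem_of_superset (Ioo_mem_nhdsGT one_pos) h)

def quadModel {n : ℕ} (g x₀ : Fin n → ℝ) (D : Matrix (Fin n) (Fin n) ℝ) (c : ℝ)
    (x : Fin n → ℝ) : ℝ :=
  g ⬝ᵥ (x - x₀) + c * ((x - x₀) ⬝ᵥ D *ᵥ (x - x₀))

section Model

variable {n : ℕ}

@[simp]
theorem quadModel_self (g x₀ : Fin n → ℝ) (D : Matrix (Fin n) (Fin n) ℝ) (c : ℝ) :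
    quadModel g x₀ D c x₀ = 0 := by
  simp [quadModel]

theorem quadModel_mono (g x₀ : Fin n → ℝ) {D : Matrix (Fin n) (Fin n) ℝ} (hD : D.PosSemidef)
    {c c' : ℝ} (hc : c ≤ c') (x : Fin n → ℝ) :
    quadModel g x₀ D c x ≤ quadModel g x₀ D c' x := by
  have hx := hD.dotProduct_mulVec_nonneg (x - x₀)
  rw [star_trivial] at hx
  unfold quadModel
  gcongr

theorem quadModel_segment (g x₀ : Fin n → ℝ) (D : Matrix (Fin n) (Fin n) ℝ) (c t : ℝ)
    (x y : Fin n → ℝ) :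
    quadModel g x₀ D c (t • x + (1 - t) • y) =
      t * quadModel g x₀ D c x + (1 - t) * quadModel g x₀ D c y
        - t * (1 - t) * (c * ((x - y) ⬝ᵥ D *ᵥ (x - y))) := by
  have hshift : t • x + (1 - t) • y - x₀ = t • (x - x₀) + (1 - t) • (y - x₀) := by module
  have hdiff : x - y = (x - x₀) - (y - x₀) := by abel
  rw [quadModel, quadModel, quadModel, hshift, D.dotProduct_mulVec_segment, hdiff,
    dotProduct_add, dotProduct_smul, dotProduct_smul, smul_eq_mul, smul_eq_mul]
  ring

theorem ERealConvex.exists_coe_le {f : (Fin n → ℝ) → EReal} (hf : ERealConvex f)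
    (hbot : ∀ x, f x ≠ ⊥) {x y : Fin n → ℝ} {a b t : ℝ} (hx : f x = a) (hy : f y = b)
    (ht₀ : 0 ≤ t) (ht₁ : t ≤ 1) :
    ∃ c : ℝ, f (t • x + (1 - t) • y) = c ∧ c ≤ t * a + (1 - t) * b := by
  have hcomb := hf x y t ht₀ ht₁
  rw [hx, hy] at hcomb
  norm_cast at hcomb
  have htop : f (t • x + (1 - t) • y) ≠ ⊤ := ne_top_of_le_ne_top (EReal.coe_ne_top _) hcomb
  refine ⟨_, (EReal.coe_toReal htop (hbot _)).symm, ?_⟩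
  rwa [← EReal.coe_le_coe_iff, EReal.coe_toReal htop (hbot _)]

/-- `hq` makes `q` exactly `m`-strongly convex along segments, so `q + f` grows at least by `m`
away from its minimiser. -/
theorem ERealConvex.sub_le_of_isMin {f : (Fin n → ℝ) → EReal} (hf : ERealConvex f)
    (hbot : ∀ x, f x ≠ ⊥) {q m : (Fin n → ℝ) → ℝ}
    (hq : ∀ t x y, q (t • x + (1 - t) • y) = t * q x + (1 - t) * q y - t * (1 - t) * m (x - y))
    {c : ℝ} {h : (Fin n → ℝ) → EReal} (hh : ∀ x, h x = (q x : EReal) + f x - c)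
    {y : Fin n → ℝ} (hmin : ∀ x, h y ≤ h x) {x : Fin n → ℝ} {a b : ℝ} (hx : f x = a)
    (hy : f y = b) :
    m (x - y) ≤ (q x + a - c) - (q y + b - c) := by
  refine le_of_forall_one_sub_mul_le fun t ht => ?_
  obtain ⟨d, hd, hdle⟩ := hf.exists_coe_le hbot hx hy ht.1.le ht.2.le
  have hle := hmin (t • x + (1 - t) • y)
  rw [hh, hh, hy, hd] at hle
  norm_cast at hle
  rw [hq] at hle
  have hscaled : t * ((1 - t) * m (x - y)) ≤ t * ((q x + a - c) - (q y + b - c)) := by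
    nlinarith
  exact le_of_mul_le_mul_left hscaled ht.1

theorem one_div_mul_enorm_sub_sq_le {D : Matrix (Fin n) (Fin n) ℝ} (hD : D.PosSemidef) {μ : ℝ}
    (hμ : 0 < μ) (hspec : spectrum ℝ D ⊆ Icc (1 / μ) μ) {α αmax : ℝ} (hα : 0 < α)
    (hαmax : α ≤ αmax) {u v : Fin n → ℝ} {A B : ℝ} (hu : 1 / (2 * α) * (u ⬝ᵥ D *ᵥ u) ≤ A)
    (hv : 1 / (2 * α) * (v ⬝ᵥ D *ᵥ v) ≤ B) :
    1 / (4 * αmax * μ) * _root_.enorm (u - v) ^ 2 ≤ A + B := by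
  have hαmax₀ : 0 < αmax := hα.trans_le hαmax
  calc 1 / (4 * αmax * μ) * _root_.enorm (u - v) ^ 2
      ≤ 1 / (4 * αmax * μ) * (μ * ((u - v) ⬝ᵥ D *ᵥ (u - v))) := by
        gcongr
        exact hD.isHermitian.enorm_sq_le hμ hspec _
    _ = 1 / (4 * αmax) * ((u - v) ⬝ᵥ D *ᵥ (u - v)) := by field_simp
    _ ≤ 1 / (4 * α) * (2 * (u ⬝ᵥ D *ᵥ u) + 2 * (v ⬝ᵥ D *ᵥ v)) := by
        have hnonneg := hD.dotProduct_mulVec_nonneg (u - v)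
        rw [star_trivial] at hnonneg
        gcongr
        exact hD.dotProduct_mulVec_sub_le u v
    _ = 1 / (2 * α) * (u ⬝ᵥ D *ᵥ u) + 1 / (2 * α) * (v ⬝ᵥ D *ᵥ v) := by ring
    _ ≤ A + B := add_le_add hu hv

end Model

theorem stmt8_general {n : ℕ} (f₁ : (Fin n → ℝ) → EReal)
    (hbot : ∀ x, f₁ x ≠ ⊥)
    (hconv : ERealConvex f₁)
    (xk : Fin n → ℝ)
    (g : Fin n → ℝ)
    (hdom : f₁ xk ≠ ⊤)
    (γ : ℝ) (hγ01 : γ ∈ Set.Icc (0 : ℝ) 1) (τ : ℝ) (hτ : 0 < τ)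
    (μ : ℝ) (hμ : 1 ≤ μ) (α αmax : ℝ) (hα : 0 < α) (hαmax : α ≤ αmax)
    (D : Matrix (Fin n) (Fin n) ℝ) (hpd : D.PosDef)
    (hspec : spectrum ℝ D ⊆ Set.Icc (1 / μ) μ)
    (hgam h : (Fin n → ℝ) → EReal)
    (hgamdef : ∀ x : Fin n → ℝ, hgam x =
      ((g ⬝ᵥ (x - xk) + γ / (2 * α) * ((x - xk) ⬝ᵥ D.mulVec (x - xk)) : ℝ) : EReal)
        + f₁ x - f₁ xk)
    (hdef : ∀ x : Fin n → ℝ, h x =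
      ((g ⬝ᵥ (x - xk) + 1 / (2 * α) * ((x - xk) ⬝ᵥ D.mulVec (x - xk)) : ℝ) : EReal)
        + f₁ x - f₁ xk)
    (y : Fin n → ℝ) (hmin : ∀ x, h y ≤ h x)
    (ytil : Fin n → ℝ)
    (hinexact : h ytil - h y ≤ ((-(τ / 2) : ℝ) : EReal) * hgam ytil) :
    ((1 / (4 * αmax * μ) * _root_.enorm (ytil - xk) ^ 2 : ℝ) : EReal)
      ≤ ((-(1 + τ) : ℝ) : EReal) * hgam ytil := by
  obtain ⟨fk, hfk⟩ : ∃ r : ℝ, f₁ xk = r := ⟨_, (EReal.coe_toReal hdom (hbot xk)).symm⟩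
  have hh : ∀ x, h x = ↑(quadModel g xk D (1 / (2 * α)) x) + f₁ x - fk := fun x => hfk ▸ hdef x
  have hhγ : ∀ x, hgam x = ↑(quadModel g xk D (γ / (2 * α)) x) + f₁ x - fk :=
    fun x => hfk ▸ hgamdef x
  obtain ⟨fy, hfy⟩ : ∃ r : ℝ, f₁ y = r := by
    have hle := hmin xk
    rw [hh xk, hfk, quadModel_self] at hle
    refine ⟨_, (EReal.coe_toReal (fun hy => ?_) (hbot y)).symm⟩
    rw [hh, EReal.coe_add_sub_coe_eq_top_iff.mpr hy] at hle
    exact absurd hle (by norm_cast)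
  obtain ⟨ft, hft⟩ : ∃ r : ℝ, f₁ ytil = r := by
    refine ⟨_, (EReal.coe_toReal (fun ht => ?_) (hbot ytil)).symm⟩
    -- otherwise the inexactness condition would read `⊤ ≤ -(τ / 2) * ⊤ = ⊥`
    rw [hh, hh, hhγ, EReal.coe_add_sub_coe_eq_top_iff.mpr ht, hfy,
      EReal.coe_add_sub_coe_eq_top_iff.mpr ht,
      EReal.mul_top_of_neg (by exact_mod_cast neg_neg_of_pos (half_pos hτ))] at hinexact
    exact absurd hinexact (by norm_cast)
  have hgrowth : ∀ x (a : ℝ), f₁ x = a → 1 / (2 * α) * ((x - y) ⬝ᵥ D *ᵥ (x - y)) ≤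
      (quadModel g xk D (1 / (2 * α)) x + a - fk) - (quadModel g xk D (1 / (2 * α)) y + fy - fk) :=
    fun x a hx => hconv.sub_le_of_isMin hbot (m := fun u => 1 / (2 * α) * (u ⬝ᵥ D *ᵥ u))
      (quadModel_segment g xk D _) hh hmin hx hfy
  have hγle := quadModel_mono g xk hpd.posSemidef (c := γ / (2 * α)) (c' := 1 / (2 * α))
    (div_le_div_of_nonneg_right hγ01.2 (by positivity)) ytil
  rw [hh, hh, hhγ, hft, hfy] at hinexact
  rw [hhγ, hft, ← sub_sub_sub_cancel_right ytil xk y]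
  norm_cast at hinexact ⊢
  refine (one_div_mul_enorm_sub_sq_le hpd.posSemidef (by linarith) hspec hα hαmax
    (hgrowth ytil ft hft) (hgrowth xk fk hfk)).trans ?_
  rw [quadModel_self]
  linarith

theorem stmt8 {n : ℕ} (f₁ : (Fin n → ℝ) → EReal)
    (hbot : ∀ x, f₁ x ≠ ⊥) (hproper : ∃ x, f₁ x ≠ ⊤)
    (hconv : ERealConvex f₁) (hlsc : LowerSemicontinuous f₁)
    (f₀ : (Fin n → ℝ) → ℝ) (f₀' : (Fin n → ℝ) →L[ℝ] ℝ)
    (xk : Fin n → ℝ) (hdiff : HasFDerivAt f₀ f₀' xk)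
    (g : Fin n → ℝ) (hgrad : ∀ u : Fin n → ℝ, f₀' u = g ⬝ᵥ u)
    (hdom : f₁ xk ≠ ⊤)
    (γ : ℝ) (hγ01 : γ ∈ Set.Icc (0 : ℝ) 1) (τ : ℝ) (hτ : 0 < τ)
    (μ : ℝ) (hμ : 1 ≤ μ) (α αmax : ℝ) (hα : 0 < α) (hαmax : α ≤ αmax)
    (D : Matrix (Fin n) (Fin n) ℝ) (hsymm : D.IsSymm) (hpd : D.PosDef)
    (hspec : spectrum ℝ D ⊆ Set.Icc (1 / μ) μ)
    (hgam h : (Fin n → ℝ) → EReal)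
    (hgamdef : ∀ x : Fin n → ℝ, hgam x =
      ((g ⬝ᵥ (x - xk) + γ / (2 * α) * ((x - xk) ⬝ᵥ D.mulVec (x - xk)) : ℝ) : EReal)
        + f₁ x - f₁ xk)
    (hdef : ∀ x : Fin n → ℝ, h x =
      ((g ⬝ᵥ (x - xk) + 1 / (2 * α) * ((x - xk) ⬝ᵥ D.mulVec (x - xk)) : ℝ) : EReal)
        + f₁ x - f₁ xk)
    (y : Fin n → ℝ) (hmin : ∀ x, h y ≤ h x)
    (huniq : ∀ z : Fin n → ℝ, (∀ x, h z ≤ h x) → z = y)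
    (ytil : Fin n → ℝ)
    (hinexact : h ytil - h y ≤ ((-(τ / 2) : ℝ) : EReal) * hgam ytil) :
    ((1 / (4 * αmax * μ) * _root_.enorm (ytil - xk) ^ 2 : ℝ) : EReal)
      ≤ ((-(1 + τ) : ℝ) : EReal) * hgam ytil :=
  stmt8_general f₁ hbot hconv xk g hdom γ hγ01 τ hτ μ hμ α αmax hα hαmax D hpd hspec hgam h hgamdef
    hdef y hmin ytil hinexact
end

section
/- Let f₀ : ℝⁿ → ℝ be differentiable with L-Lipschitz gradient on a convex set C, let f₁ be proper convex lsc with dom(f₁) ⊆ C, x^(k) ∈ dom(f₁), ỹ ∈ dom(f₁), d = ỹ − x^(k), and h_γ(ỹ) ≤ 0 where h_γ(x) = ⟨∇f₀(x^(k)), x−x^(k)⟩ + (γ/(2α))‖x−x^(k)‖²_D + f₁(x) − f₁(x^(k)). Suppose moreover that c‖ỹ − x^(k)‖² ≤ −h_γ(ỹ) for some c > 0, with f = f₀ + f₁. Then for every λ ∈ [0,1]: f(x^(k) + λd) ≤ f(x^(k)) + λ(1 − (L/(2c))λ) h_γ(ỹ). -/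
open Matrix

/-!
Along the segment `xₖ + λd` the descent lemma bounds `f₀` by its linearization plus
`(L/2)λ²‖d‖²`, and convexity bounds `f₁` by its chord. Adding the two and using
`⟨d, Dd⟩ ≥ 0` gives `f ≤ f(xₖ) + λ h_γ(ỹ) + (L/2)λ²‖d‖²`, and the coercivity assumption
`c‖d‖² ≤ -h_γ(ỹ)` turns the quadratic term into `-(L/(2c))λ² h_γ(ỹ)`.
-/

section EuclideanNorm

variable {n : ℕ}

theorem enorm_smul_eq_abs_mul (t : ℝ) (x : Fin n → ℝ) :
    _root_.enorm (t • x) = |t| * _root_.enorm x := by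
  unfold _root_.enorm
  rw [← Real.sqrt_sq_eq_abs, ← Real.sqrt_mul (sq_nonneg t), Finset.mul_sum]
  simp only [Pi.smul_apply, smul_eq_mul, mul_pow]

theorem dotProduct_le_enorm_mul_enorm (u v : Fin n → ℝ) :
    u ⬝ᵥ v ≤ _root_.enorm u * _root_.enorm v :=
  Real.sum_mul_le_sqrt_mul_sqrt Finset.univ u v

end EuclideanNorm

theorem descent_lemma {n : ℕ} {C : Set (Fin n → ℝ)} (hC : Convex ℝ C)
    {f₀ : (Fin n → ℝ) → ℝ} {f' : (Fin n → ℝ) → ((Fin n → ℝ) →L[ℝ] ℝ)}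
    {g : (Fin n → ℝ) → (Fin n → ℝ)}
    (hdiff : ∀ x ∈ C, HasFDerivAt f₀ (f' x) x)
    (hgradrep : ∀ x ∈ C, ∀ u : Fin n → ℝ, f' x u = g x ⬝ᵥ u) {L : ℝ}
    (hlip : ∀ x ∈ C, ∀ y ∈ C, _root_.enorm (g x - g y) ≤ L * _root_.enorm (x - y))
    {x y : Fin n → ℝ} (hx : x ∈ C) (hy : y ∈ C) {t : ℝ} (ht : t ∈ Set.Icc (0 : ℝ) 1) :
    f₀ (x + t • (y - x)) ≤
      f₀ x + t * (g x ⬝ᵥ (y - x)) + L / 2 * t ^ 2 * _root_.enorm (y - x) ^ 2 := by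
  set d := y - x
  have hseg : ∀ s ∈ Set.Icc (0 : ℝ) 1, x + s • d ∈ C := fun s hs => hC.add_smul_sub_mem hx hy hs
  -- The Lipschitz bound on `g` makes `φ` antitone on `[0, 1]`; compare `φ t` with `φ 0`.
  set φ : ℝ → ℝ := fun s => f₀ (x + s • d) - s * (g x ⬝ᵥ d) - L / 2 * s ^ 2 * _root_.enorm d ^ 2
  set φ' : ℝ → ℝ := fun s => (g (x + s • d) - g x) ⬝ᵥ d - L * s * _root_.enorm d ^ 2
  have hφ : ∀ s ∈ Set.Icc (0 : ℝ) 1, HasDerivAt φ (φ' s) s := by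
    intro s hs
    have hline : HasDerivAt (fun s : ℝ => x + s • d) d s := by
      simpa using ((hasDerivAt_id s).smul_const d).const_add x
    have hf₀ := (hdiff _ (hseg s hs)).comp_hasDerivAt s hline
    rw [Function.comp_def, hgradrep _ (hseg s hs)] at hf₀
    refine ((hf₀.sub ((hasDerivAt_id s).mul_const (g x ⬝ᵥ d))).sub
      (((hasDerivAt_pow 2 s).const_mul (L / 2)).mul_const (_root_.enorm d ^ 2))).congr_deriv ?_
    simp only [φ', sub_dotProduct, Nat.cast_ofNat]
    ring
  have hφ'_nonpos : ∀ s ∈ Set.Icc (0 : ℝ) 1, φ' s ≤ 0 := by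
    intro s hs
    have hgap : (g (x + s • d) - g x) ⬝ᵥ d ≤ L * s * _root_.enorm d ^ 2 := calc
      _ ≤ _root_.enorm (g (x + s • d) - g x) * _root_.enorm d := dotProduct_le_enorm_mul_enorm _ _
      _ ≤ L * _root_.enorm (x + s • d - x) * _root_.enorm d :=
          mul_le_mul_of_nonneg_right (hlip _ (hseg s hs) _ hx) (Real.sqrt_nonneg _)
      _ = L * s * _root_.enorm d ^ 2 := by
          rw [add_sub_cancel_left, enorm_smul_eq_abs_mul, abs_of_nonneg hs.1]
          ring
    simp only [φ']
    linarith
  have hanti : AntitoneOn φ (Set.Icc 0 1) := by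
    refine antitoneOn_of_hasDerivWithinAt_nonpos (convex_Icc 0 1)
      (fun s hs => (hφ s hs).continuousAt.continuousWithinAt) (fun s hs => ?_)
      (fun s hs => hφ'_nonpos s (interior_subset hs))
    exact (hφ s (interior_subset hs)).hasDerivWithinAt
  have := hanti (by simp) ht ht.1
  simp only [φ, zero_smul, add_zero] at this
  linarith

theorem ERealConvex.apply_add_smul_sub_le {n : ℕ} {f : (Fin n → ℝ) → EReal}
    (hf : ERealConvex f) {x y : Fin n → ℝ} {a b : ℝ} (hx : f x = a) (hy : f y = b)
    {t : ℝ} (ht : t ∈ Set.Icc (0 : ℝ) 1) :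
    f (x + t • (y - x)) ≤ ((a + t * (b - a) : ℝ) : EReal) := by
  have h := hf y x t ht.1 ht.2
  rwa [hx, hy, ← EReal.coe_mul, ← EReal.coe_mul, ← EReal.coe_add,
    show t • y + (1 - t) • x = x + t • (y - x) by module,
    show t * b + (1 - t) * a = a + t * (b - a) by ring] at h

theorem stmt10_general {n : ℕ} (C : Set (Fin n → ℝ)) (hC : Convex ℝ C)
    (f₀ : (Fin n → ℝ) → ℝ) (f' : (Fin n → ℝ) → ((Fin n → ℝ) →L[ℝ] ℝ))
    (g : (Fin n → ℝ) → (Fin n → ℝ))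
    (hdiff : ∀ x ∈ C, HasFDerivAt f₀ (f' x) x)
    (hgradrep : ∀ x ∈ C, ∀ u : Fin n → ℝ, f' x u = g x ⬝ᵥ u)
    (L : ℝ) (hL : 0 < L)
    (hlip : ∀ x ∈ C, ∀ y ∈ C, _root_.enorm (g x - g y) ≤ L * _root_.enorm (x - y))
    (f₁ : (Fin n → ℝ) → EReal)
    (hbot : ∀ x, f₁ x ≠ ⊥)
    (hconv : ERealConvex f₁)
    (hdomC : ∀ x : Fin n → ℝ, f₁ x ≠ ⊤ → x ∈ C)
    (α γ : ℝ) (hα : 0 < α) (hγ01 : γ ∈ Set.Icc (0 : ℝ) 1)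
    (D : Matrix (Fin n) (Fin n) ℝ) (hpd : D.PosDef)
    (xk ytil : Fin n → ℝ) (hxk : f₁ xk ≠ ⊤) (hytil : f₁ ytil ≠ ⊤)
    (hgam : (Fin n → ℝ) → EReal)
    (hgamdef : ∀ x : Fin n → ℝ, hgam x =
      ((g xk ⬝ᵥ (x - xk) + γ / (2 * α) * ((x - xk) ⬝ᵥ D.mulVec (x - xk)) : ℝ) : EReal)
        + f₁ x - f₁ xk)
    (c : ℝ) (hc : 0 < c)
    (hcoer : ((c * _root_.enorm (ytil - xk) ^ 2 : ℝ) : EReal) ≤ -hgam ytil) :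
    ∀ lam : ℝ, lam ∈ Set.Icc (0 : ℝ) 1 →
      ((f₀ (xk + lam • (ytil - xk)) : ℝ) : EReal) + f₁ (xk + lam • (ytil - xk)) ≤
        ((f₀ xk : ℝ) : EReal) + f₁ xk
          + ((lam * (1 - L / (2 * c) * lam) : ℝ) : EReal) * hgam ytil := by
  intro lam hlam
  set d := ytil - xk
  obtain ⟨a, ha⟩ : ∃ a : ℝ, f₁ xk = a := ⟨_, (EReal.coe_toReal hxk (hbot xk)).symm⟩
  obtain ⟨b, hb⟩ : ∃ b : ℝ, f₁ ytil = b := ⟨_, (EReal.coe_toReal hytil (hbot ytil)).symm⟩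
  set q := γ / (2 * α) * (d ⬝ᵥ D.mulVec d)
  set r := g xk ⬝ᵥ d + q + b - a
  have hr : hgam ytil = r := by rw [hgamdef, ha, hb]; norm_cast
  have hq : 0 ≤ q := mul_nonneg (div_nonneg hγ01.1 (by positivity))
    (by simpa using hpd.posSemidef.dotProduct_mulVec_nonneg d)
  have hcoer' : c * _root_.enorm d ^ 2 ≤ -r := by rw [hr] at hcoer; exact_mod_cast hcoer
  have hf₀ := descent_lemma hC hdiff hgradrep hlip (hdomC xk hxk) (hdomC ytil hytil) hlam
  have hf₁ := hconv.apply_add_smul_sub_le ha hb hlam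
  have hcurv : L / 2 * lam ^ 2 * _root_.enorm d ^ 2 ≤ -(L / (2 * c)) * lam ^ 2 * r := calc
    _ ≤ L / 2 * lam ^ 2 * (-r / c) :=
        mul_le_mul_of_nonneg_left ((le_div_iff₀ hc).2 (by linarith)) (by positivity)
    _ = _ := by field_simp
  calc ((f₀ (xk + lam • d) : ℝ) : EReal) + f₁ (xk + lam • d)
      ≤ ((f₀ (xk + lam • d) + (a + lam * (b - a)) : ℝ) : EReal) := by
        rw [EReal.coe_add]; exact add_le_add le_rfl hf₁
    _ ≤ ((f₀ xk + a + lam * (1 - L / (2 * c) * lam) * r : ℝ) : EReal) := by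
        norm_cast; linarith [mul_nonneg hlam.1 hq]
    _ = ((f₀ xk : ℝ) : EReal) + f₁ xk
          + ((lam * (1 - L / (2 * c) * lam) : ℝ) : EReal) * hgam ytil := by
        rw [hr, ha]; norm_cast

theorem stmt10 {n : ℕ} (C : Set (Fin n → ℝ)) (hC : Convex ℝ C)
    (f₀ : (Fin n → ℝ) → ℝ) (f' : (Fin n → ℝ) → ((Fin n → ℝ) →L[ℝ] ℝ))
    (g : (Fin n → ℝ) → (Fin n → ℝ))
    (hdiff : ∀ x ∈ C, HasFDerivAt f₀ (f' x) x)
    (hgradrep : ∀ x ∈ C, ∀ u : Fin n → ℝ, f' x u = g x ⬝ᵥ u)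
    (L : ℝ) (hL : 0 < L)
    (hlip : ∀ x ∈ C, ∀ y ∈ C, _root_.enorm (g x - g y) ≤ L * _root_.enorm (x - y))
    (f₁ : (Fin n → ℝ) → EReal)
    (hbot : ∀ x, f₁ x ≠ ⊥) (hproper : ∃ x, f₁ x ≠ ⊤)
    (hconv : ERealConvex f₁) (hlsc : LowerSemicontinuous f₁)
    (hdomC : ∀ x : Fin n → ℝ, f₁ x ≠ ⊤ → x ∈ C)
    (α γ : ℝ) (hα : 0 < α) (hγ01 : γ ∈ Set.Icc (0 : ℝ) 1)
    (D : Matrix (Fin n) (Fin n) ℝ) (hsymm : D.IsSymm) (hpd : D.PosDef)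
    (xk ytil : Fin n → ℝ) (hxk : f₁ xk ≠ ⊤) (hytil : f₁ ytil ≠ ⊤)
    (hgam : (Fin n → ℝ) → EReal)
    (hgamdef : ∀ x : Fin n → ℝ, hgam x =
      ((g xk ⬝ᵥ (x - xk) + γ / (2 * α) * ((x - xk) ⬝ᵥ D.mulVec (x - xk)) : ℝ) : EReal)
        + f₁ x - f₁ xk)
    (hneg : hgam ytil ≤ 0)
    (c : ℝ) (hc : 0 < c)
    (hcoer : ((c * _root_.enorm (ytil - xk) ^ 2 : ℝ) : EReal) ≤ -hgam ytil) :
    ∀ lam : ℝ, lam ∈ Set.Icc (0 : ℝ) 1 →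
      ((f₀ (xk + lam • (ytil - xk)) : ℝ) : EReal) + f₁ (xk + lam • (ytil - xk)) ≤
        ((f₀ xk : ℝ) : EReal) + f₁ xk
          + ((lam * (1 - L / (2 * c) * lam) : ℝ) : EReal) * hgam ytil :=
  stmt10_general C hC f₀ f' g hdiff hgradrep L hL hlip f₁ hbot hconv hdomC α γ hα hγ01 D hpd xk ytil
    hxk hytil hgam hgamdef c hc hcoer
end

section
/- Let q(x) = (1/(2α))‖x − z‖²_D with α > 0, D symmetric positive definite, and ε ≥ 0. Then ∂_ε q(x) = { (1/α) D (x − z + e) : e ∈ ℝⁿ, ‖e‖²_D ≤ 2αε }. -/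
/-!
Since `D` is invertible, every `v` can be written as `(1/α) D (x - z + e)`. Completing the square,
the `ε`-subgradient inequality for this `v` at `y` reads `‖e‖²_D - ‖y - x - e‖²_D ≤ 2αε`, and it
holds for all `y` exactly when it holds at the minimiser `y = x + e`, i.e. when `‖e‖²_D ≤ 2αε`.
-/

open Matrix

variable {ι : Type*} [Fintype ι]

lemma Matrix.IsSymm.dotProduct_mulVec_comm {D : Matrix ι ι ℝ} (hD : D.IsSymm) (a b : ι → ℝ) :
    a ⬝ᵥ D *ᵥ b = b ⬝ᵥ D *ᵥ a := by
  rw [dotProduct_mulVec, ← mulVec_transpose, hD.eq, dotProduct_comm]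

lemma quadratic_add_tangent_sub_eq {D : Matrix ι ι ℝ} (hD : D.IsSymm) {α : ℝ} (hα : α ≠ 0)
    (a u e : ι → ℝ) :
    1 / (2 * α) * (a ⬝ᵥ D *ᵥ a) + ((1 / α) • D *ᵥ (a + e)) ⬝ᵥ u
      - 1 / (2 * α) * ((a + u) ⬝ᵥ D *ᵥ (a + u)) =
      (e ⬝ᵥ D *ᵥ e - (u - e) ⬝ᵥ D *ᵥ (u - e)) / (2 * α) := by
  simp only [mulVec_add, mulVec_sub, dotProduct_add, add_dotProduct, dotProduct_sub,
    sub_dotProduct, smul_dotProduct, smul_eq_mul]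
  rw [dotProduct_comm (D *ᵥ a) u, dotProduct_comm (D *ᵥ e) u, hD.dotProduct_mulVec_comm u a,
    hD.dotProduct_mulVec_comm u e]
  field_simp
  ring

lemma forall_affine_sub_le_quadratic_iff {D : Matrix ι ι ℝ} (hD : D.PosSemidef) {α ε : ℝ}
    (hα : 0 < α) {z : ι → ℝ} {q : (ι → ℝ) → ℝ}
    (hq : ∀ y, q y = 1 / (2 * α) * ((y - z) ⬝ᵥ D *ᵥ (y - z))) (x e : ι → ℝ) :
    (∀ y, q x + ((1 / α) • D *ᵥ (x - z + e)) ⬝ᵥ (y - x) - ε ≤ q y) ↔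
      e ⬝ᵥ D *ᵥ e ≤ 2 * α * ε := by
  have ineq_iff (y : ι → ℝ) : (q x + ((1 / α) • D *ᵥ (x - z + e)) ⬝ᵥ (y - x) - ε ≤ q y) ↔
      e ⬝ᵥ D *ᵥ e - (y - x - e) ⬝ᵥ D *ᵥ (y - x - e) ≤ 2 * α * ε := by
    rw [sub_le_comm, hq, hq, show y - z = x - z + (y - x) by abel,
      quadratic_add_tangent_sub_eq (isHermitian_iff_isSymm.mp hD.isHermitian) hα.ne',
      div_le_iff₀ (by positivity), mul_comm]
  simp only [ineq_iff]
  refine ⟨fun h ↦ by simpa using h (x + e), fun h y ↦ ?_⟩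
  have hnonneg : 0 ≤ (y - x - e) ⬝ᵥ D *ᵥ (y - x - e) := by
    simpa using hD.dotProduct_mulVec_nonneg (y - x - e)
  linarith

lemma exists_eq_smul_mulVec_add [DecidableEq ι] {D : Matrix ι ι ℝ} (hD : IsUnit D) {α : ℝ}
    (hα : α ≠ 0) (a v : ι → ℝ) : ∃ e, v = (1 / α) • D *ᵥ (a + e) := by
  obtain ⟨w, hw⟩ := mulVec_surjective_iff_isUnit.mpr hD (α • v)
  refine ⟨w - a, ?_⟩
  rw [add_sub_cancel, hw, smul_smul, one_div, inv_mul_cancel₀ hα, one_smul]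

theorem stmt14_general {n : ℕ} (α ε : ℝ) (hα : 0 < α)
    (D : Matrix (Fin n) (Fin n) ℝ) (hpd : D.PosDef)
    (z x : Fin n → ℝ)
    (q : (Fin n → ℝ) → ℝ)
    (hq : ∀ y : Fin n → ℝ, q y = 1 / (2 * α) * ((y - z) ⬝ᵥ D.mulVec (y - z))) :
    {v : Fin n → ℝ | ∀ y : Fin n → ℝ, q x + v ⬝ᵥ (y - x) - ε ≤ q y} =
      {w : Fin n → ℝ | ∃ e : Fin n → ℝ,
        e ⬝ᵥ D.mulVec e ≤ 2 * α * ε ∧ w = (1 / α) • D.mulVec (x - z + e)} := by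
  ext v
  constructor
  · intro hv
    obtain ⟨e, rfl⟩ := exists_eq_smul_mulVec_add hpd.isUnit hα.ne' (x - z) v
    exact ⟨e, (forall_affine_sub_le_quadratic_iff hpd.posSemidef hα hq x e).mp hv, rfl⟩
  · rintro ⟨e, he, rfl⟩
    exact (forall_affine_sub_le_quadratic_iff hpd.posSemidef hα hq x e).mpr he

theorem stmt14 {n : ℕ} (α ε : ℝ) (hα : 0 < α) (hε : 0 ≤ ε)
    (D : Matrix (Fin n) (Fin n) ℝ) (hsymm : D.IsSymm) (hpd : D.PosDef)
    (z x : Fin n → ℝ)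
    (q : (Fin n → ℝ) → ℝ)
    (hq : ∀ y : Fin n → ℝ, q y = 1 / (2 * α) * ((y - z) ⬝ᵥ D.mulVec (y - z))) :
    {v : Fin n → ℝ | ∀ y : Fin n → ℝ, q x + v ⬝ᵥ (y - x) - ε ≤ q y} =
      {w : Fin n → ℝ | ∃ e : Fin n → ℝ,
        e ⬝ᵥ D.mulVec e ≤ 2 * α * ε ∧ w = (1 / α) • D.mulVec (x - z + e)} :=
  stmt14_general α ε hα D hpd z x q hq
end

section
/- Let {r_k} be a sequence of positive reals satisfying φ'(r_{k+1})² (r_k − r_{k+1}) ≥ c for all k ≥ k̄, where c > 0 and φ(t) = (C/θ)t^θ with C > 0 and θ ∈ [1/2, 1). Then there exist d > 0 and Q ∈ (0,1) such that r_k ≤ r_{k̄} Q^{k−k̄} for all k ≥ k̄, i.e., r_k = O(e^{−d(k−k̄)}). -/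
/-!
Since `φ'(t)² = C² t^{2θ-2}`, the hypothesis says `r_k - r_{k+1} ≥ (c/C²) r_{k+1}^{2-2θ}`, so the
sequence decreases from `k̄` on and stays below `R = r_{k̄}`. As `2 - 2θ ≤ 1`, on `(0, R]` the power
`t^{2-2θ}` dominates the linear function `t R^{1-2θ}`, which turns the decrease into
`r_k - r_{k+1} ≥ b r_{k+1}` with `b = (c/C²) R^{1-2θ} > 0`, i.e. `r_{k+1} ≤ r_k / (1 + b)`.
-/

open Real

theorem Real.mul_rpow_sub_one_le_rpow {x R s : ℝ} (hx : 0 < x) (hxR : x ≤ R) (hs : s ≤ 1) :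
    x * R ^ (s - 1) ≤ x ^ s := by
  calc x * R ^ (s - 1) ≤ x * x ^ (s - 1) :=
        mul_le_mul_of_nonneg_left (rpow_le_rpow_of_nonpos hx hxR (by linarith)) hx.le
    _ = x ^ s := by rw [rpow_sub_one hx.ne', mul_div_cancel₀ _ hx.ne']

theorem le_div_one_add_of_mul_rpow_le_sub {a s x y R : ℝ} (ha : 0 ≤ a) (hs : s ≤ 1)
    (hx : 0 < x) (hxR : x ≤ R) (h : a * x ^ s ≤ y - x) :
    x ≤ y / (1 + a * R ^ (s - 1)) := by
  have hR : 0 < R := hx.trans_le hxR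
  rw [le_div_iff₀ (by positivity)]
  nlinarith [Real.mul_rpow_sub_one_le_rpow hx hxR hs]

theorem le_mul_pow_sub_of_le_mul {r : ℕ → ℝ} {Q : ℝ} (hQ : 0 ≤ Q) {k₀ : ℕ}
    (h : ∀ k ≥ k₀, r (k + 1) ≤ Q * r k) : ∀ k ≥ k₀, r k ≤ r k₀ * Q ^ (k - k₀) := by
  intro k hk
  induction k, hk using Nat.le_induction with
  | base => simp
  | succ k hk ih =>
    calc r (k + 1) ≤ Q * r k := h k hk
      _ ≤ Q * (r k₀ * Q ^ (k - k₀)) := by gcongr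
      _ = r k₀ * Q ^ (k + 1 - k₀) := by rw [Nat.sub_add_comm hk, pow_succ]; ring

theorem le_of_mul_rpow_le_sub {r : ℕ → ℝ} (hr : ∀ k, 0 < r k) {a s : ℝ} (ha : 0 ≤ a) {k₀ : ℕ}
    (h : ∀ k ≥ k₀, a * r (k + 1) ^ s ≤ r k - r (k + 1)) : ∀ k ≥ k₀, r k ≤ r k₀ := by
  intro k hk
  induction k, hk using Nat.le_induction with
  | base => rfl
  | succ k hk ih =>
    have := h k hk
    have : 0 ≤ a * r (k + 1) ^ s := mul_nonneg ha (rpow_nonneg (hr _).le s)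
    linarith

theorem le_mul_pow_sub_of_mul_rpow_le_sub {r : ℕ → ℝ} (hr : ∀ k, 0 < r k) {a s : ℝ}
    (ha : 0 ≤ a) (hs : s ≤ 1) {k₀ : ℕ} (h : ∀ k ≥ k₀, a * r (k + 1) ^ s ≤ r k - r (k + 1)) :
    ∀ k ≥ k₀, r k ≤ r k₀ * (1 + a * r k₀ ^ (s - 1))⁻¹ ^ (k - k₀) := by
  have hpos : 0 < 1 + a * r k₀ ^ (s - 1) := by have := hr k₀; positivity
  refine le_mul_pow_sub_of_le_mul (inv_nonneg.2 hpos.le) fun k hk => ?_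
  rw [← div_eq_inv_mul]
  exact le_div_one_add_of_mul_rpow_le_sub ha hs (hr _)
    (le_of_mul_rpow_le_sub hr ha h (k + 1) (by omega)) (h k hk)

theorem div_sq_mul_rpow_le_of_le_sq_mul_rpow {c C θ x d : ℝ} (hC : C ≠ 0) (hx : 0 < x)
    (h : c ≤ (C * x ^ (θ - 1)) ^ 2 * d) : c / C ^ 2 * x ^ (2 - 2 * θ) ≤ d := by
  have hcancel : (C * x ^ (θ - 1)) ^ 2 * x ^ (2 - 2 * θ) = C ^ 2 := by
    rw [mul_pow, ← rpow_natCast (x ^ (θ - 1)), ← rpow_mul hx.le, mul_assoc, ← rpow_add hx]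
    norm_num [show (θ - 1) * 2 + (2 - 2 * θ) = 0 by ring]
  have hxs : 0 ≤ x ^ (2 - 2 * θ) := rpow_nonneg hx.le _
  calc c / C ^ 2 * x ^ (2 - 2 * θ) ≤ (C * x ^ (θ - 1)) ^ 2 * d / C ^ 2 * x ^ (2 - 2 * θ) := by
        gcongr
    _ = d := by rw [div_mul_eq_mul_div, mul_right_comm, hcancel, mul_div_cancel_left₀ _ (by positivity)]

theorem stmt17 (r : ℕ → ℝ) (hr : ∀ k, 0 < r k)
    (c C θ : ℝ) (hc : 0 < c) (hC : 0 < C) (hθ : θ ∈ Set.Ico (1 / 2 : ℝ) 1)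
    (kbar : ℕ)
    (hrec : ∀ k ≥ kbar, c ≤ (C * r (k + 1) ^ (θ - 1)) ^ 2 * (r k - r (k + 1))) :
    ∃ Q : ℝ, 0 < Q ∧ Q < 1 ∧ ∀ k ≥ kbar, r k ≤ r kbar * Q ^ (k - kbar) := by
  have hdesc : ∀ k ≥ kbar, c / C ^ 2 * r (k + 1) ^ (2 - 2 * θ) ≤ r k - r (k + 1) := fun k hk =>
    div_sq_mul_rpow_le_of_le_sq_mul_rpow hC.ne' (hr _) (hrec k hk)
  have hb : 0 < c / C ^ 2 * r kbar ^ (2 - 2 * θ - 1) := by have := hr kbar; positivity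
  refine ⟨(1 + c / C ^ 2 * r kbar ^ (2 - 2 * θ - 1))⁻¹, by positivity, inv_lt_one_of_one_lt₀ (by linarith), ?_⟩
  exact le_mul_pow_sub_of_mul_rpow_le_sub hr (by positivity) (by linarith [hθ.1]) hdesc
end

section
/- Let {r_k} be a nonincreasing sequence of positive reals satisfying φ'(r_{k+1})²(r_k − r_{k+1}) ≥ c for all k ≥ k̄, where c > 0, φ(t) = (C/θ)t^θ with C > 0 and θ ∈ (0, 1/2). Then r_k = O((k − k̄)^{−1/(1−2θ)}) as k → ∞. -/
/-- Bernoulli-type concavity bound: for `0 < b ≤ a` and `ν ∈ [0,1]`,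
`ν * a ^ (ν - 1) * (a - b) ≤ a ^ ν - b ^ ν`. -/
lemma aux_concave {a b ν : ℝ} (hb : 0 < b) (hba : b ≤ a) (hν0 : 0 ≤ ν) (hν1 : ν ≤ 1) :
    ν * a ^ (ν - 1) * (a - b) ≤ a ^ ν - b ^ ν := by
  have ha : 0 < a := lt_of_lt_of_le hb hba
  have hs : (-1 : ℝ) ≤ b / a - 1 := by
    have : 0 ≤ b / a := le_of_lt (div_pos hb ha)
    linarith
  have hber := rpow_one_add_le_one_add_mul_self hs hν0 hν1
  have h1 : (1 + (b / a - 1)) = b / a := by ring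
  rw [h1] at hber
  have hbp : b ^ ν = a ^ ν * (b / a) ^ ν := by
    rw [← Real.mul_rpow (le_of_lt ha) (le_of_lt (div_pos hb ha)),
      mul_div_cancel₀ _ (ne_of_gt ha)]
  have haν : 0 < a ^ ν := Real.rpow_pos_of_pos ha ν
  have key : b ^ ν ≤ a ^ ν * (1 + ν * (b / a - 1)) := by
    rw [hbp]
    exact mul_le_mul_of_nonneg_left hber (le_of_lt haν)
  have haν1 : a ^ (ν - 1) = a ^ ν / a := by
    rw [Real.rpow_sub ha, Real.rpow_one]
  rw [haν1]
  have expand : a ^ ν * (1 + ν * (b / a - 1)) = a ^ ν - ν * (a ^ ν / a) * (a - b) := by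
    field_simp
    ring
  rw [expand] at key
  linarith

theorem stmt18 (r : ℕ → ℝ) (hr : ∀ k, 0 < r k) (hmono : Antitone r)
    (c C θ : ℝ) (hc : 0 < c) (hC : 0 < C) (hθ : θ ∈ Set.Ioo (0 : ℝ) (1 / 2))
    (kbar : ℕ)
    (hrec : ∀ k ≥ kbar, c ≤ (C * r (k + 1) ^ (θ - 1)) ^ 2 * (r k - r (k + 1))) :
    ∃ M : ℝ, 0 < M ∧ ∃ K : ℕ, ∀ k ≥ K,
      r k ≤ M * ((k : ℝ) - (kbar : ℝ)) ^ (-(1 / (1 - 2 * θ))) := by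
  obtain ⟨hθ0, hθ2⟩ := hθ
  set ν : ℝ := 1 - 2 * θ with hν_def
  have hν0 : 0 < ν := by simp only [hν_def]; linarith
  have hν1 : ν < 1 := by simp only [hν_def]; linarith
  set μ₁ : ℝ := ν * c / (2 * C ^ 2) with hμ₁_def
  set μ₂ : ℝ := ((2 : ℝ) ^ ν - 1) * (r kbar) ^ (-ν) with hμ₂_def
  have hμ₁ : 0 < μ₁ := by
    apply div_pos (mul_pos hν0 hc); positivity
  have h2ν : (1 : ℝ) < (2 : ℝ) ^ ν := by
    rw [Real.one_lt_rpow_iff_of_pos (by norm_num)]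
    left; exact ⟨by norm_num, hν0⟩
  have hμ₂ : 0 < μ₂ := by
    apply mul_pos (by linarith)
    exact Real.rpow_pos_of_pos (hr kbar) _
  set μ : ℝ := min μ₁ μ₂ with hμ_def
  have hμ : 0 < μ := lt_min hμ₁ hμ₂
  -- key step: each iteration increases `r k ^ (-ν)` by at least `μ`
  have hstep : ∀ k ≥ kbar, r k ^ (-ν) + μ ≤ r (k + 1) ^ (-ν) := by
    intro k hk
    have ha : 0 < r k := hr k
    have hb : 0 < r (k + 1) := hr (k + 1)
    have hba : r (k + 1) ≤ r k := hmono (Nat.le_succ k)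
    have haν : 0 < r k ^ ν := Real.rpow_pos_of_pos ha ν
    have hbν : 0 < r (k + 1) ^ ν := Real.rpow_pos_of_pos hb ν
    -- the drop bound from the recursion
    have hdrop : c / C ^ 2 * r (k + 1) ^ (1 + ν) ≤ r k - r (k + 1) := by
      have h := hrec k hk
      have hpow : (C * r (k + 1) ^ (θ - 1)) ^ 2 = C ^ 2 * r (k + 1) ^ (-(1 + ν)) := by
        rw [mul_pow]
        congr 1
        rw [← Real.rpow_natCast (r (k + 1) ^ (θ - 1)) 2, ← Real.rpow_mul (le_of_lt hb)]
        congr 1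
        push_cast
        simp only [hν_def]; ring
      rw [hpow] at h
      have hβ : 0 < r (k + 1) ^ (1 + ν) := Real.rpow_pos_of_pos hb _
      rw [Real.rpow_neg (le_of_lt hb)] at h
      rw [div_mul_eq_mul_div, div_le_iff₀ (by positivity)]
      have h2 := mul_le_mul_of_nonneg_right h (le_of_lt hβ)
      have h3 : C ^ 2 * (r (k + 1) ^ (1 + ν))⁻¹ * (r k - r (k + 1)) * r (k + 1) ^ (1 + ν)
          = (r k - r (k + 1)) * C ^ 2 := by
        field_simp
      rw [h3] at h2
      linarith
    rw [Real.rpow_neg (le_of_lt ha), Real.rpow_neg (le_of_lt hb)]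
    rcases le_or_gt (r k / 2) (r (k + 1)) with hcase | hcase
    · -- small drop case: use concavity
      have hcc := aux_concave hb hba (le_of_lt hν0) (le_of_lt hν1)
      have hsplit : r (k + 1) ^ (1 + ν) = r (k + 1) * r (k + 1) ^ ν := by
        rw [Real.rpow_add hb, Real.rpow_one]
      have haν1 : r k ^ (ν - 1) = r k ^ ν / r k := by
        rw [Real.rpow_sub ha, Real.rpow_one]
      have hkey : μ * (r k ^ ν * r (k + 1) ^ ν) ≤ r k ^ ν - r (k + 1) ^ ν := by
        calc μ * (r k ^ ν * r (k + 1) ^ ν)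
            ≤ μ₁ * (r k ^ ν * r (k + 1) ^ ν) := by
              apply mul_le_mul_of_nonneg_right (min_le_left _ _); positivity
          _ = ν * c / (2 * C ^ 2) * (r k ^ ν * r (k + 1) ^ ν) := by rw [hμ₁_def]
          _ ≤ ν * (c / C ^ 2) * (r (k + 1) / r k) * (r k ^ ν * r (k + 1) ^ ν) := by
              apply mul_le_mul_of_nonneg_right _ (by positivity)
              have h12 : (1 : ℝ) / 2 ≤ r (k + 1) / r k := by
                rw [le_div_iff₀ ha]; linarith
              have : ν * c / (2 * C ^ 2) = ν * (c / C ^ 2) * (1 / 2) := by ring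
              rw [this]
              apply mul_le_mul_of_nonneg_left h12 (by positivity)
          _ = ν * (r k ^ ν / r k) * (c / C ^ 2 * (r (k + 1) * r (k + 1) ^ ν)) := by
              field_simp
          _ = ν * r k ^ (ν - 1) * (c / C ^ 2 * r (k + 1) ^ (1 + ν)) := by
              rw [haν1, hsplit]
          _ ≤ ν * r k ^ (ν - 1) * (r k - r (k + 1)) := by
              apply mul_le_mul_of_nonneg_left hdrop; positivity
          _ ≤ r k ^ ν - r (k + 1) ^ ν := hcc
      have e1 : (r (k + 1) ^ ν)⁻¹ - (r k ^ ν)⁻¹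
          = (1 * r k ^ ν - r (k + 1) ^ ν * 1) / (r (k + 1) ^ ν * r k ^ ν) := by
        rw [inv_eq_one_div, inv_eq_one_div, div_sub_div _ _ (ne_of_gt hbν) (ne_of_gt haν)]
      have hdiv : μ ≤ (1 * r k ^ ν - r (k + 1) ^ ν * 1) / (r (k + 1) ^ ν * r k ^ ν) := by
        rw [le_div_iff₀ (by positivity)]
        nlinarith [hkey]
      rw [← e1] at hdiv
      linarith
    · -- big drop case
      have hhalf : 0 < r k / 2 := by linarith
      have h1 : (r k / 2) ^ (-ν) ≤ r (k + 1) ^ (-ν) :=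
        Real.rpow_le_rpow_of_nonpos hb (le_of_lt hcase) (by linarith)
      have h2 : (r k / 2) ^ (-ν) = 2 ^ ν * (r k ^ ν)⁻¹ := by
        rw [Real.div_rpow (le_of_lt ha) (by norm_num), Real.rpow_neg (le_of_lt ha),
          Real.rpow_neg (by norm_num : (0:ℝ) ≤ 2)]
        field_simp
      have h3 : (r kbar) ^ (-ν) ≤ (r k) ^ (-ν) :=
        Real.rpow_le_rpow_of_nonpos ha (hmono hk) (by linarith)
      rw [Real.rpow_neg (le_of_lt ha)] at h3
      rw [Real.rpow_neg (le_of_lt hb)] at h1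
      rw [h2] at h1
      have hμle : μ ≤ ((2:ℝ) ^ ν - 1) * (r k ^ ν)⁻¹ := by
        calc μ ≤ μ₂ := min_le_right _ _
          _ = ((2:ℝ) ^ ν - 1) * (r kbar) ^ (-ν) := hμ₂_def
          _ ≤ ((2:ℝ) ^ ν - 1) * (r k ^ ν)⁻¹ := by
              apply mul_le_mul_of_nonneg_left h3 (by linarith)
      nlinarith [haν.le, inv_pos.2 haν]
  -- iterate
  have hgrow : ∀ n : ℕ, μ * n ≤ r (kbar + n) ^ (-ν) := by
    intro n
    induction n with
    | zero => simpa using (Real.rpow_pos_of_pos (hr kbar) (-ν)).le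
    | succ n ih =>
      have := hstep (kbar + n) (Nat.le_add_right _ _)
      push_cast
      calc μ * (n + 1) = μ * n + μ := by ring
        _ ≤ r (kbar + n) ^ (-ν) + μ := by linarith
        _ ≤ r (kbar + n + 1) ^ (-ν) := this
  refine ⟨μ ^ (-(1 / ν)), Real.rpow_pos_of_pos hμ _, kbar + 1, fun k hk => ?_⟩
  obtain ⟨n, rfl⟩ : ∃ n : ℕ, k = kbar + n := ⟨k - kbar, by omega⟩
  have hn1 : 1 ≤ n := by omega
  have hnpos : (0 : ℝ) < n := by exact_mod_cast hn1
  have hgr := hgrow n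
  have hμn : 0 < μ * n := mul_pos hμ hnpos
  have hrk : 0 < r (kbar + n) := hr _
  -- r k = (r k ^ (-ν)) ^ (-(1/ν))
  have hrepr : r (kbar + n) = (r (kbar + n) ^ (-ν)) ^ (-(1 / ν)) := by
    rw [← Real.rpow_mul (le_of_lt hrk)]
    rw [show (-ν) * (-(1 / ν)) = 1 by field_simp]
    rw [Real.rpow_one]
  have hbound : (r (kbar + n) ^ (-ν)) ^ (-(1 / ν)) ≤ (μ * n) ^ (-(1 / ν)) :=
    Real.rpow_le_rpow_of_nonpos hμn hgr (by
      rw [neg_nonpos]; positivity)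
  have hcast : ((kbar + n : ℕ) : ℝ) - (kbar : ℝ) = (n : ℝ) := by push_cast; ring
  rw [hcast]
  calc r (kbar + n) = (r (kbar + n) ^ (-ν)) ^ (-(1 / ν)) := hrepr
    _ ≤ (μ * n) ^ (-(1 / ν)) := hbound
    _ = μ ^ (-(1 / ν)) * (n : ℝ) ^ (-(1 / ν)) :=
        Real.mul_rpow (le_of_lt hμ) (le_of_lt hnpos)
end
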